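/- arXiv:1710.05018 — 3 statements merged into one kernel-verified Lean document; each statement's English description precedes it below -/
import Mathlib

section
/- Let 𝔤 = 𝔤' ⊕ 𝔠 where 𝔤' is a semisimple compact Lie algebra and 𝔠 is central, with an ad-invariant inner product, and let π : 𝔤 → 𝔰𝔬(V) be an injective homomorphism with no nonzero fixed vectors. Let ∇ be the Koszul product on 𝔫 = 𝔤 ⊕ V defined by ⟨∇_a b, c⟩ = ½(⟨[a,b],c⟩ - ⟨[b,c],a⟩ + ⟨[c,a],b⟩). Suppose Y = (Y_𝔤, Y_V) ∈ 𝔫 and D is a skew-symmetric derivation of 𝔫 such that ∇_X Y = D(X) for all X ∈ 𝔫. Then Y_V = 0, i.e., Y lies in the 𝔤-factor. -/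
open scoped RealInnerProductSpace

/-!
The `V`-component of `∇_{(x,0)} Y` paired with `w ∈ V` is `-½⟨[Y_V, w], x⟩`, while a derivation
maps the brackets `([v, w], 0)` into `𝔤`, since `[𝔫, 𝔫] ⊆ 𝔤`. Taking `x = [Y_V, w]` in
`∇_X Y = D X` therefore gives `‖[Y_V, w]‖² = 0` for every `w`, i.e. `⟨π(x) Y_V, w⟩ = 0` for all
`x` and `w`, and `Y_V` is a fixed vector of `π`.
-/

section TwoStepNilpotent

variable {V G : Type*}
  [NormedAddCommGroup V] [InnerProductSpace ℝ V] [NormedAddCommGroup G] [InnerProductSpace ℝ G]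

theorem eq_zero_of_bracket_eq_zero {π : G →ₗ[ℝ] V →ₗ[ℝ] V}
    (hnofix : ∀ v : V, (∀ x : G, π x v = 0) → v = 0)
    {br : V →ₗ[ℝ] V →ₗ[ℝ] G} (hbr : ∀ (v w : V) (x : G), ⟪br v w, x⟫ = ⟪π x v, w⟫)
    {v : V} (hv : ∀ w : V, br v w = 0) : v = 0 :=
  hnofix v fun x => ext_inner_right ℝ fun w => by
    rw [← hbr, hv, inner_zero_left, inner_zero_left]

theorem inner_snd_koszul_inl {br : V →ₗ[ℝ] V →ₗ[ℝ] G}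
    {B : G × V → G × V → G × V} (hB : ∀ a b : G × V, B a b = (br a.2 b.2, (0 : V)))
    {ip : G × V → G × V → ℝ} (hip : ∀ a b : G × V, ip a b = ⟪a.1, b.1⟫ + ⟪a.2, b.2⟫)
    {nabla : G × V → G × V → G × V}
    (hKoszul : ∀ a b c' : G × V,
      ip (nabla a b) c' = (1 / 2) * (ip (B a b) c' - ip (B b c') a + ip (B c' a) b))
    (x : G) (b : G × V) (w : V) :
    ⟪(nabla (x, 0) b).2, w⟫ = -(1 / 2) * ⟪br b.2 w, x⟫ := by
  have h := hKoszul (x, 0) b (0, w)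
  simp only [hB, hip, map_zero, LinearMap.zero_apply, inner_zero_left, inner_zero_right,
    zero_add, add_zero] at h
  linarith

theorem snd_derivation_bracket_eq_zero {br : V →ₗ[ℝ] V →ₗ[ℝ] G}
    {B : G × V → G × V → G × V} (hB : ∀ a b : G × V, B a b = (br a.2 b.2, (0 : V)))
    {D : G × V → G × V} (hDder : ∀ a b : G × V, D (B a b) = B (D a) b + B a (D b))
    (v w : V) : (D (br v w, 0)).2 = 0 := by
  simpa [hB] using congrArg Prod.snd (hDder (0, v) (0, w))

end TwoStepNilpotent

theorem stmt_16_general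
    {V G : Type*}
    [NormedAddCommGroup V] [InnerProductSpace ℝ V]
    [NormedAddCommGroup G] [InnerProductSpace ℝ G]
    (π : G →ₗ[ℝ] V →ₗ[ℝ] V)
    (hnofix : ∀ v : V, (∀ x : G, π x v = 0) → v = 0)
    -- the Lie bracket, inner product and Koszul product on 𝔫 = 𝔤 ⊕ V
    (br : V →ₗ[ℝ] V →ₗ[ℝ] G)
    (hbr : ∀ (v w : V) (x : G), ⟪br v w, x⟫ = ⟪π x v, w⟫)
    (B : G × V → G × V → G × V)
    (hB : ∀ a b : G × V, B a b = (br a.2 b.2, (0 : V)))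
    (ip : G × V → G × V → ℝ)
    (hip : ∀ a b : G × V, ip a b = ⟪a.1, b.1⟫ + ⟪a.2, b.2⟫)
    (nabla : G × V → G × V → G × V)
    (hKoszul : ∀ a b c' : G × V,
      ip (nabla a b) c' = (1 / 2) * (ip (B a b) c' - ip (B b c') a + ip (B c' a) b))
    -- a skew-symmetric derivation D with ∇_X Y = D X for all X
    (Y : G × V) (D : G × V →ₗ[ℝ] G × V)
    (hDder : ∀ a b : G × V, D (B a b) = B (D a) b + B a (D b))
    (hDY : ∀ X : G × V, nabla X Y = D X) :
    Y.2 = 0 := by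
  refine eq_zero_of_bracket_eq_zero hnofix hbr fun w => ?_
  have h := inner_snd_koszul_inl hB hip hKoszul (br Y.2 w) Y w
  rw [hDY, snd_derivation_bracket_eq_zero hB hDder, inner_zero_left] at h
  have : ⟪br Y.2 w, br Y.2 w⟫ = 0 := by linarith
  exact inner_self_eq_zero.mp this

/-- algebraic core of the main theorem. With `𝔤 = 𝔤' ⊕ 𝔠`
(`𝔤'` compact semisimple, i.e. perfect with ad-invariant inner product, `𝔠` the
center), `π` injective without nonzero fixed vectors, if `Y ∈ 𝔫` and a
skew-symmetric derivation `D` of `𝔫` satisfy `∇_X Y = D(X)` for all `X ∈ 𝔫`,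
then the `V`-component of `Y` vanishes. -/
theorem stmt_16
    {V G : Type*}
    [NormedAddCommGroup V] [InnerProductSpace ℝ V] [FiniteDimensional ℝ V]
    [NormedAddCommGroup G] [InnerProductSpace ℝ G] [FiniteDimensional ℝ G]
    (bg : G →ₗ[ℝ] G →ₗ[ℝ] G)   -- the Lie bracket of 𝔤
    (hbganti : ∀ x y : G, bg y x = -bg x y)
    (hbgjac : ∀ x y z : G, bg x (bg y z) + bg y (bg z x) + bg z (bg x y) = 0)
    (hadinv : ∀ x y z : G, ⟪bg x y, z⟫ = -⟪y, bg x z⟫)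
    (π : G →ₗ[ℝ] V →ₗ[ℝ] V)
    (hskew : ∀ (x : G) (v w : V), ⟪π x v, w⟫ = -⟪v, π x w⟫)
    (hhom : ∀ x y : G, π (bg x y) = π x ∘ₗ π y - π y ∘ₗ π x)
    (hinj : Function.Injective π)
    (hnofix : ∀ v : V, (∀ x : G, π x v = 0) → v = 0)
    -- 𝔤 = 𝔤' ⊕ 𝔠 with 𝔤' a semisimple (perfect) subalgebra and 𝔠 the center
    (G' c : Submodule ℝ G)
    (hG'sub : ∀ x ∈ G', ∀ y ∈ G', bg x y ∈ G')
    (hcenter : ∀ x : G, x ∈ c ↔ ∀ y : G, bg x y = 0)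
    (hcompl : IsCompl G' c)
    (hperfect : ∀ x ∈ G',
      x ∈ Submodule.span ℝ {m : G | ∃ a ∈ G', ∃ b ∈ G', m = bg a b})
    -- the Lie bracket, inner product and Koszul product on 𝔫 = 𝔤 ⊕ V
    (br : V →ₗ[ℝ] V →ₗ[ℝ] G)
    (hbr : ∀ (v w : V) (x : G), ⟪br v w, x⟫ = ⟪π x v, w⟫)
    (B : G × V → G × V → G × V)
    (hB : ∀ a b : G × V, B a b = (br a.2 b.2, (0 : V)))
    (ip : G × V → G × V → ℝ)
    (hip : ∀ a b : G × V, ip a b = ⟪a.1, b.1⟫ + ⟪a.2, b.2⟫)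
    (nabla : G × V → G × V → G × V)
    (hKoszul : ∀ a b c' : G × V,
      ip (nabla a b) c' = (1 / 2) * (ip (B a b) c' - ip (B b c') a + ip (B c' a) b))
    -- a skew-symmetric derivation D with ∇_X Y = D X for all X
    (Y : G × V) (D : G × V →ₗ[ℝ] G × V)
    (hDskew : ∀ a b : G × V, ip (D a) b = -ip a (D b))
    (hDder : ∀ a b : G × V, D (B a b) = B (D a) b + B a (D b))
    (hDY : ∀ X : G × V, nabla X Y = D X) :
    Y.2 = 0 :=
  stmt_16_general π hnofix br hbr B hB ip hip nabla hKoszul Y D hDder hDY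
end

section
/- In the setting of the previous statement (𝔤 = 𝔤' ⊕ 𝔠 with 𝔤' semisimple, π injective without fixed vectors), if Y ∈ 𝔫 and a skew-symmetric derivation D of 𝔫 satisfy ∇_X Y = D(X) for all X ∈ 𝔫, then the component of Y in 𝔤' also vanishes; hence Y ∈ 𝔠, the center of 𝔤. -/
/-!
Expanding the Koszul formula, `∇_{(x,w)}(y,u) = (½[w,u], -½(π(x)u + π(y)w))`. Feeding this into
the derivation identity for `D = ∇_·Y` on a pair of brackets `[w,w'] ∈ 𝔤` gives
`[π(x)u + π(y)w, w'] + [w, π(x')u + π(y)w'] = 0`. With `w = x' = 0` it says `[π(x)u, ·] = 0`,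
so `π(x)u` and then `u` are fixed vectors, hence zero. With `x = x' = 0` it says `π(y)` is a
derivation of the bracket `V × V → 𝔤`, which dualizes to `[π(z), π(y)] = 0` for every `z`; by
injectivity of `π` the element `y` is central.
-/

open scoped RealInnerProductSpace

section KoszulProduct

variable {V G : Type*}
  [NormedAddCommGroup V] [InnerProductSpace ℝ V] [NormedAddCommGroup G] [InnerProductSpace ℝ G]
  {π : G →ₗ[ℝ] V →ₗ[ℝ] V} {br : V →ₗ[ℝ] V →ₗ[ℝ] G}

lemma apply_eq_zero_of_forall_br_eq_zero (hbr : ∀ (v w : V) (x : G), ⟪br v w, x⟫ = ⟪π x v, w⟫)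
    {v : V} (h : ∀ w, br v w = 0) (z : G) : π z v = 0 :=
  ext_inner_right ℝ fun w => by rw [← hbr, h, inner_zero_left, inner_zero_left]

lemma comp_comm_of_br_derivation (hskew : ∀ (x : G) (v w : V), ⟪π x v, w⟫ = -⟪v, π x w⟫)
    (hbr : ∀ (v w : V) (x : G), ⟪br v w, x⟫ = ⟪π x v, w⟫) {y : G}
    (h : ∀ w w' : V, br (π y w) w' + br w (π y w') = 0) (z : G) :
    π y ∘ₗ π z = π z ∘ₗ π y := by
  ext w
  refine ext_inner_right ℝ fun w' => ?_
  have hz := congrArg (⟪·, z⟫) (h w w')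
  simp only [inner_add_left, inner_zero_left, hbr] at hz
  have hyz : ⟪π y (π z w), w'⟫ = -⟪π z w, π y w'⟫ := hskew y (π z w) w'
  simp only [LinearMap.comp_apply]
  linarith

lemma nabla_apply_eq (hskew : ∀ (x : G) (v w : V), ⟪π x v, w⟫ = -⟪v, π x w⟫)
    (hbr : ∀ (v w : V) (x : G), ⟪br v w, x⟫ = ⟪π x v, w⟫)
    {B : G × V → G × V → G × V} (hB : ∀ a b : G × V, B a b = (br a.2 b.2, (0 : V)))
    {ip : G × V → G × V → ℝ} (hip : ∀ a b : G × V, ip a b = ⟪a.1, b.1⟫ + ⟪a.2, b.2⟫)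
    {nabla : G × V → G × V → G × V}
    (hKoszul : ∀ a b c' : G × V,
      ip (nabla a b) c' = (1 / 2) * (ip (B a b) c' - ip (B b c') a + ip (B c' a) b))
    (x y : G) (w u : V) :
    nabla (x, w) (y, u) = ((1 / 2 : ℝ) • br w u, -(1 / 2 : ℝ) • (π x u + π y w)) := by
  have h := fun z t => hKoszul (x, w) (y, u) (z, t)
  simp only [hB, hip, inner_zero_left, add_zero] at h
  ext
  · refine ext_inner_right ℝ fun z => ?_
    simpa [real_inner_smul_left] using h z 0
  · refine ext_inner_right ℝ fun t => ?_
    have ht := h 0 t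
    simp only [hbr, map_zero, LinearMap.zero_apply, inner_zero_left, inner_zero_right, zero_add,
      zero_sub] at ht
    rw [hskew y t w, real_inner_comm (π y w)] at ht
    simp only [real_inner_smul_left, inner_add_left]
    linarith

lemma br_add_br_eq_zero_of_derivation
    {B : G × V → G × V → G × V} (hB : ∀ a b : G × V, B a b = (br a.2 b.2, (0 : V)))
    {D : G × V →ₗ[ℝ] G × V} (hDder : ∀ a b : G × V, D (B a b) = B (D a) b + B a (D b))
    {y : G} {u : V}
    (hD : ∀ (x : G) (w : V), D (x, w) = ((1 / 2 : ℝ) • br w u, -(1 / 2 : ℝ) • (π x u + π y w)))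
    (x x' : G) (w w' : V) :
    br (π x u + π y w) w' + br w (π x' u + π y w') = 0 := by
  have h := congrArg Prod.fst (hDder (x, w) (x', w'))
  simp only [hB, hD, map_zero, LinearMap.zero_apply, smul_zero, Prod.fst_add, map_smul,
    LinearMap.smul_apply, ← smul_add] at h
  exact (smul_eq_zero.mp h.symm).resolve_left (by norm_num)

end KoszulProduct

theorem stmt_17_general
    {V G : Type*}
    [NormedAddCommGroup V] [InnerProductSpace ℝ V]
    [NormedAddCommGroup G] [InnerProductSpace ℝ G]
    (bg : G →ₗ[ℝ] G →ₗ[ℝ] G)   -- the Lie bracket of 𝔤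
    (π : G →ₗ[ℝ] V →ₗ[ℝ] V)
    (hskew : ∀ (x : G) (v w : V), ⟪π x v, w⟫ = -⟪v, π x w⟫)
    (hhom : ∀ x y : G, π (bg x y) = π x ∘ₗ π y - π y ∘ₗ π x)
    (hinj : Function.Injective π)
    (hnofix : ∀ v : V, (∀ x : G, π x v = 0) → v = 0)
    -- 𝔤 = 𝔤' ⊕ 𝔠 with 𝔤' a semisimple (perfect) subalgebra and 𝔠 the center
    (c : Submodule ℝ G)
    (hcenter : ∀ x : G, x ∈ c ↔ ∀ y : G, bg x y = 0)
    -- the Lie bracket, inner product and Koszul product on 𝔫 = 𝔤 ⊕ V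
    (br : V →ₗ[ℝ] V →ₗ[ℝ] G)
    (hbr : ∀ (v w : V) (x : G), ⟪br v w, x⟫ = ⟪π x v, w⟫)
    (B : G × V → G × V → G × V)
    (hB : ∀ a b : G × V, B a b = (br a.2 b.2, (0 : V)))
    (ip : G × V → G × V → ℝ)
    (hip : ∀ a b : G × V, ip a b = ⟪a.1, b.1⟫ + ⟪a.2, b.2⟫)
    (nabla : G × V → G × V → G × V)
    (hKoszul : ∀ a b c' : G × V,
      ip (nabla a b) c' = (1 / 2) * (ip (B a b) c' - ip (B b c') a + ip (B c' a) b))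
    -- a skew-symmetric derivation D with ∇_X Y = D X for all X
    (Y : G × V) (D : G × V →ₗ[ℝ] G × V)
    (hDder : ∀ a b : G × V, D (B a b) = B (D a) b + B a (D b))
    (hDY : ∀ X : G × V, nabla X Y = D X) :
    Y.2 = 0 ∧ Y.1 ∈ c := by
  obtain ⟨y, u⟩ := Y
  have hD : ∀ x w, D (x, w) = ((1 / 2 : ℝ) • br w u, -(1 / 2 : ℝ) • (π x u + π y w)) :=
    fun x w => (hDY _).symm.trans (nabla_apply_eq hskew hbr hB hip hKoszul x y w u)
  have hder := br_add_br_eq_zero_of_derivation hB hDder hD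
  have hu : u = 0 := by
    refine hnofix u fun x => hnofix _ fun z => apply_eq_zero_of_forall_br_eq_zero hbr
      (fun w' => ?_) z
    simpa using hder x 0 0 w'
  have hy : ∀ z, π y ∘ₗ π z = π z ∘ₗ π y :=
    comp_comm_of_br_derivation hskew hbr fun w w' => by simpa using hder 0 0 w w'
  refine ⟨hu, (hcenter y).2 fun z => hinj ?_⟩
  rw [hhom, hy, sub_self, map_zero]

/-- algebraic core of the main theorem. With `𝔤 = 𝔤' ⊕ 𝔠`
(`𝔤'` compact semisimple, i.e. perfect with ad-invariant inner product, `𝔠` the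
center), `π` injective without nonzero fixed vectors, if `Y ∈ 𝔫` and a
skew-symmetric derivation `D` of `𝔫` satisfy `∇_X Y = D(X)` for all `X ∈ 𝔫`,
then also the `𝔤'`-component of `Y` vanishes; hence `Y` lies in the center
`𝔠` of `𝔤` (and its `V`-component is zero). -/
theorem stmt_17
    {V G : Type*}
    [NormedAddCommGroup V] [InnerProductSpace ℝ V] [FiniteDimensional ℝ V]
    [NormedAddCommGroup G] [InnerProductSpace ℝ G] [FiniteDimensional ℝ G]
    (bg : G →ₗ[ℝ] G →ₗ[ℝ] G)   -- the Lie bracket of 𝔤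
    (hbganti : ∀ x y : G, bg y x = -bg x y)
    (hbgjac : ∀ x y z : G, bg x (bg y z) + bg y (bg z x) + bg z (bg x y) = 0)
    (hadinv : ∀ x y z : G, ⟪bg x y, z⟫ = -⟪y, bg x z⟫)
    (π : G →ₗ[ℝ] V →ₗ[ℝ] V)
    (hskew : ∀ (x : G) (v w : V), ⟪π x v, w⟫ = -⟪v, π x w⟫)
    (hhom : ∀ x y : G, π (bg x y) = π x ∘ₗ π y - π y ∘ₗ π x)
    (hinj : Function.Injective π)
    (hnofix : ∀ v : V, (∀ x : G, π x v = 0) → v = 0)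
    -- 𝔤 = 𝔤' ⊕ 𝔠 with 𝔤' a semisimple (perfect) subalgebra and 𝔠 the center
    (G' c : Submodule ℝ G)
    (hG'sub : ∀ x ∈ G', ∀ y ∈ G', bg x y ∈ G')
    (hcenter : ∀ x : G, x ∈ c ↔ ∀ y : G, bg x y = 0)
    (hcompl : IsCompl G' c)
    (hperfect : ∀ x ∈ G',
      x ∈ Submodule.span ℝ {m : G | ∃ a ∈ G', ∃ b ∈ G', m = bg a b})
    -- the Lie bracket, inner product and Koszul product on 𝔫 = 𝔤 ⊕ V
    (br : V →ₗ[ℝ] V →ₗ[ℝ] G)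
    (hbr : ∀ (v w : V) (x : G), ⟪br v w, x⟫ = ⟪π x v, w⟫)
    (B : G × V → G × V → G × V)
    (hB : ∀ a b : G × V, B a b = (br a.2 b.2, (0 : V)))
    (ip : G × V → G × V → ℝ)
    (hip : ∀ a b : G × V, ip a b = ⟪a.1, b.1⟫ + ⟪a.2, b.2⟫)
    (nabla : G × V → G × V → G × V)
    (hKoszul : ∀ a b c' : G × V,
      ip (nabla a b) c' = (1 / 2) * (ip (B a b) c' - ip (B b c') a + ip (B c' a) b))
    -- a skew-symmetric derivation D with ∇_X Y = D X for all X
    (Y : G × V) (D : G × V →ₗ[ℝ] G × V)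
    (hDskew : ∀ a b : G × V, ip (D a) b = -ip a (D b))
    (hDder : ∀ a b : G × V, D (B a b) = B (D a) b + B a (D b))
    (hDY : ∀ X : G × V, nabla X Y = D X) :
    Y.2 = 0 ∧ Y.1 ∈ c :=
  stmt_17_general bg π hskew hhom hinj hnofix c hcenter br hbr B hB ip hip nabla hKoszul Y D hDder
    hDY
end

section
/- Conversely, for every Y ∈ 𝔠 (the center of 𝔤) there exists a skew-symmetric derivation D of 𝔫 = 𝔤 ⊕ V such that ∇_X Y = D(X) for all X ∈ 𝔫; explicitly, one may take D to be zero on 𝔤 and equal to -½ π(Y) on V. -/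
open scoped RealInnerProductSpace

/-!
The derivation is `D = 0 × A` with `A = -½ π(Y)`. It is skew because `π(Y)` is. It is a
derivation because `D` kills `[𝔫, 𝔫] ⊆ 𝔤`, while `[A v, w]_V + [v, A w]_V = 0` follows by pairing
with `x ∈ 𝔤`: the defining identity of `[·,·]_V` turns it into `⟪π x (A v), w⟫ + ⟪π x v, A w⟫`,
which vanishes since `π(Y)` commutes with `π(x)` and is skew. Finally, in the Koszul formula for
`∇_X (Y, 0)` only the term `⟪[c, X], Y⟫ = ⟪π(Y) c_V, X_V⟫` survives, and this is `⟪D X, c⟫`.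
-/

section

variable {V G : Type*} [NormedAddCommGroup V] [InnerProductSpace ℝ V]
  [NormedAddCommGroup G] [InnerProductSpace ℝ G]

theorem Prod.ext_of_inner_right {u w : G × V}
    (h : ∀ c : G × V, ⟪u.1, c.1⟫ + ⟪u.2, c.2⟫ = ⟪w.1, c.1⟫ + ⟪w.2, c.2⟫) : u = w := by
  refine Prod.ext (ext_inner_right (𝕜 := ℝ) fun x => ?_) (ext_inner_right (𝕜 := ℝ) fun v => ?_)
  · simpa using h (x, 0)
  · simpa using h (0, v)

theorem commute_of_bracket_eq_zero {bg : G →ₗ[ℝ] G →ₗ[ℝ] G} {π : G →ₗ[ℝ] V →ₗ[ℝ] V}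
    (hhom : ∀ x y : G, π (bg x y) = π x ∘ₗ π y - π y ∘ₗ π x) {Y x : G} (h : bg Y x = 0) :
    Commute (π Y) (π x) := by
  have := hhom Y x
  rwa [h, map_zero, eq_comm, sub_eq_zero, ← Module.End.mul_eq_comp,
    ← Module.End.mul_eq_comp] at this

theorem bracket_map_add_bracket_map_eq_zero {π : G →ₗ[ℝ] V →ₗ[ℝ] V} {br : V →ₗ[ℝ] V →ₗ[ℝ] G}
    (hbr : ∀ (v w : V) (x : G), ⟪br v w, x⟫ = ⟪π x v, w⟫) {A : V →ₗ[ℝ] V}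
    (hA : ∀ v w : V, ⟪A v, w⟫ = -⟪v, A w⟫) (hcomm : ∀ x : G, Commute (π x) A) (v w : V) :
    br (A v) w + br v (A w) = 0 := by
  refine ext_inner_right (𝕜 := ℝ) fun x => ?_
  have hx : π x (A v) = A (π x v) := LinearMap.congr_fun (hcomm x).eq v
  rw [inner_add_left, hbr, hbr, hx, hA, inner_zero_left, neg_add_cancel]

theorem koszul_apply_central {π : G →ₗ[ℝ] V →ₗ[ℝ] V} {Y : G}
    (hskew : ∀ v w : V, ⟪π Y v, w⟫ = -⟪v, π Y w⟫) {br : V →ₗ[ℝ] V →ₗ[ℝ] G}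
    (hbr : ∀ (v w : V) (x : G), ⟪br v w, x⟫ = ⟪π x v, w⟫)
    {B : G × V → G × V → G × V} (hB : ∀ a b : G × V, B a b = (br a.2 b.2, (0 : V)))
    {ip : G × V → G × V → ℝ} (hip : ∀ a b : G × V, ip a b = ⟪a.1, b.1⟫ + ⟪a.2, b.2⟫)
    {nabla : G × V → G × V → G × V}
    (hKoszul : ∀ a b c : G × V,
      ip (nabla a b) c = (1 / 2) * (ip (B a b) c - ip (B b c) a + ip (B c a) b))
    (X : G × V) : nabla X (Y, (0 : V)) = ((0 : G), -(1 / 2 : ℝ) • π Y X.2) := by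
  refine Prod.ext_of_inner_right fun c => ?_
  rw [← hip, hKoszul]
  simp only [hB, hip, map_zero, LinearMap.zero_apply, inner_zero_left, inner_zero_right,
    hbr, hskew, real_inner_smul_right, real_inner_comm c.2]
  ring

end

theorem stmt_18_general
    {V G : Type*}
    [NormedAddCommGroup V] [InnerProductSpace ℝ V]
    [NormedAddCommGroup G] [InnerProductSpace ℝ G]
    (bg : G →ₗ[ℝ] G →ₗ[ℝ] G)   -- the Lie bracket of 𝔤
    (π : G →ₗ[ℝ] V →ₗ[ℝ] V)
    (hskew : ∀ (x : G) (v w : V), ⟪π x v, w⟫ = -⟪v, π x w⟫)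
    (hhom : ∀ x y : G, π (bg x y) = π x ∘ₗ π y - π y ∘ₗ π x)
    -- the Lie bracket, inner product and Koszul product on 𝔫 = 𝔤 ⊕ V
    (br : V →ₗ[ℝ] V →ₗ[ℝ] G)
    (hbr : ∀ (v w : V) (x : G), ⟪br v w, x⟫ = ⟪π x v, w⟫)
    (B : G × V → G × V → G × V)
    (hB : ∀ a b : G × V, B a b = (br a.2 b.2, (0 : V)))
    (ip : G × V → G × V → ℝ)
    (hip : ∀ a b : G × V, ip a b = ⟪a.1, b.1⟫ + ⟪a.2, b.2⟫)
    (nabla : G × V → G × V → G × V)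
    (hKoszul : ∀ a b c : G × V,
      ip (nabla a b) c = (1 / 2) * (ip (B a b) c - ip (B b c) a + ip (B c a) b))
    -- Y is central in 𝔤
    (Y : G) (hY : ∀ x : G, bg Y x = 0) :
    ∃ D : G × V →ₗ[ℝ] G × V,
      (∀ (z : G) (v : V), D (z, v) = ((0 : G), -(1 / 2 : ℝ) • π Y v)) ∧
      (∀ a b : G × V, ip (D a) b = -ip a (D b)) ∧
      (∀ a b : G × V, D (B a b) = B (D a) b + B a (D b)) ∧
      (∀ X : G × V, nabla X (Y, (0 : V)) = D X) := by
  set A : V →ₗ[ℝ] V := -(1 / 2 : ℝ) • π Y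
  have hA_skew : ∀ v w : V, ⟪A v, w⟫ = -⟪v, A w⟫ := fun v w => by
    simp only [A, LinearMap.smul_apply, real_inner_smul_left, real_inner_smul_right, hskew]
    ring
  have hA_comm : ∀ x : G, Commute (π x) A :=
    fun x => (commute_of_bracket_eq_zero hhom (hY x)).symm.smul_right _
  have hA_bracket := bracket_map_add_bracket_map_eq_zero hbr hA_skew hA_comm
  refine ⟨LinearMap.prodMap 0 A, fun z v => rfl, fun a b => ?_, fun a b => ?_,
    fun X => koszul_apply_central (hskew Y) hbr hB hip hKoszul X⟩
  · simp [hip, hA_skew]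
  · simp [hB, hA_bracket]

/-- conversely, for every `Y` in the center `𝔠` of `𝔤` there is a
skew-symmetric derivation `D` of `𝔫 = 𝔤 ⊕ V` with `∇_X Y = D(X)` for all
`X ∈ 𝔫`; explicitly `D(z,v) = (0, -½ π(Y)v)`. -/
theorem stmt_18
    {V G : Type*}
    [NormedAddCommGroup V] [InnerProductSpace ℝ V] [FiniteDimensional ℝ V]
    [NormedAddCommGroup G] [InnerProductSpace ℝ G] [FiniteDimensional ℝ G]
    (bg : G →ₗ[ℝ] G →ₗ[ℝ] G)   -- the Lie bracket of 𝔤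
    (hbganti : ∀ x y : G, bg y x = -bg x y)
    (hbgjac : ∀ x y z : G, bg x (bg y z) + bg y (bg z x) + bg z (bg x y) = 0)
    (hadinv : ∀ x y z : G, ⟪bg x y, z⟫ = -⟪y, bg x z⟫)
    (π : G →ₗ[ℝ] V →ₗ[ℝ] V)
    (hskew : ∀ (x : G) (v w : V), ⟪π x v, w⟫ = -⟪v, π x w⟫)
    (hhom : ∀ x y : G, π (bg x y) = π x ∘ₗ π y - π y ∘ₗ π x)
    -- the Lie bracket, inner product and Koszul product on 𝔫 = 𝔤 ⊕ V
    (br : V →ₗ[ℝ] V →ₗ[ℝ] G)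
    (hbr : ∀ (v w : V) (x : G), ⟪br v w, x⟫ = ⟪π x v, w⟫)
    (B : G × V → G × V → G × V)
    (hB : ∀ a b : G × V, B a b = (br a.2 b.2, (0 : V)))
    (ip : G × V → G × V → ℝ)
    (hip : ∀ a b : G × V, ip a b = ⟪a.1, b.1⟫ + ⟪a.2, b.2⟫)
    (nabla : G × V → G × V → G × V)
    (hKoszul : ∀ a b c : G × V,
      ip (nabla a b) c = (1 / 2) * (ip (B a b) c - ip (B b c) a + ip (B c a) b))
    -- Y is central in 𝔤
    (Y : G) (hY : ∀ x : G, bg Y x = 0) :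
    ∃ D : G × V →ₗ[ℝ] G × V,
      (∀ (z : G) (v : V), D (z, v) = ((0 : G), -(1 / 2 : ℝ) • π Y v)) ∧
      (∀ a b : G × V, ip (D a) b = -ip a (D b)) ∧
      (∀ a b : G × V, D (B a b) = B (D a) b + B a (D b)) ∧
      (∀ X : G × V, nabla X (Y, (0 : V)) = D X) :=
  stmt_18_general bg π hskew hhom br hbr B hB ip hip nabla hKoszul Y hY
end
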